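/- Let P be a well-moded program and Ā a well-moded query, and let ξ be an LD-derivation of Ā in P. Then every atom selected in ξ contains ground terms in all of its input positions. -/

import Mathlib

/-- First-order terms over function symbols `F` and variables `V`. -/
inductive Term (F V : Type) : Type where
  | var : V → Term F V
  | fn  : F → List (Term F V) → Term F V

namespace Term

/-- `VarIn v t` holds iff the variable `v` occurs in the term `t`. -/
inductive VarIn {F V : Type} : V → Term F V → Prop where
  | var (v : V) : VarIn v (.var v)
  | fn {v : V} (f : F) {args : List (Term F V)} {t : Term F V} :
      t ∈ args → VarIn v t → VarIn v (.fn f args)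

/-- Application of a substitution (a map from variables to terms) to a term. -/
def subst {F V : Type} (σ : V → Term F V) : Term F V → Term F V
  | .var v => σ v
  | .fn f args => .fn f (args.attach.map fun t => subst σ t.1)
termination_by t => sizeOf t
decreasing_by
  have := List.sizeOf_lt_of_mem t.2
  simp only [Term.fn.sizeOf_spec]
  omega

end Term

/-- The set of variables occurring in a list (tuple) of terms. -/
def varsOf {F V : Type} (ts : List (Term F V)) : Set V :=
  {v | ∃ t ∈ ts, Term.VarIn v t}

/-- An atom `p(s̄, t̄)`: a relation symbol together with the tuple of terms
filling its input positions and the tuple filling its output positions. -/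
structure Atom (P F V : Type) where
  pred : P
  inputs : List (Term F V)
  outputs : List (Term F V)

/-- Application of a substitution to an atom. -/
def Atom.subst {P F V : Type} (σ : V → Term F V) (A : Atom P F V) : Atom P F V :=
  ⟨A.pred, A.inputs.map (Term.subst σ), A.outputs.map (Term.subst σ)⟩

/-- The set of variables occurring in an atom. -/
def Atom.vars {P F V : Type} (A : Atom P F V) : Set V :=
  varsOf A.inputs ∪ varsOf A.outputs

/-- The set of variables occurring in a query (a list of atoms). -/
def queryVars {P F V : Type} (Q : List (Atom P F V)) : Set V :=
  {v | ∃ a ∈ Q, v ∈ a.vars}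

/-- A query `p_1(s̄_1,t̄_1), …, p_n(s̄_n,t̄_n)` is well-moded iff for every `i`,
`Var(s̄_i) ⊆ ⋃_{j=1}^{i-1} Var(t̄_j)`. -/
def WellModedQuery {P F V : Type} (Q : List (Atom P F V)) : Prop :=
  ∀ i (h : i < Q.length),
    varsOf (Q.get ⟨i, h⟩).inputs ⊆ varsOf (((Q.take i).map Atom.outputs).flatten)

/-- A clause `p_0(t̄_0, s̄_{n+1}) ← p_1(s̄_1,t̄_1), …, p_n(s̄_n,t̄_n)` (with head
input tuple `t̄_0 = head.inputs` and head output tuple `s̄_{n+1} = head.outputs`)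
is well-moded iff for every `i ∈ [1, n+1]`, `Var(s̄_i) ⊆ ⋃_{j=0}^{i-1} Var(t̄_j)`. -/
def WellModedClause {P F V : Type} (head : Atom P F V) (body : List (Atom P F V)) : Prop :=
  (∀ i (h : i < body.length),
    varsOf (body.get ⟨i, h⟩).inputs ⊆
      varsOf (head.inputs ++ ((body.take i).map Atom.outputs).flatten)) ∧
  varsOf head.outputs ⊆ varsOf (head.inputs ++ (body.map Atom.outputs).flatten)

/-- Composition of substitutions: first apply `θ`, then `τ`. -/
def Subst.comp {F V : Type} (θ τ : V → Term F V) : V → Term F V :=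
  fun v => (θ v).subst τ

/-- `θ` is a unifier of the atoms `A` and `H` iff `Aθ = Hθ`. -/
def IsUnifier {P F V : Type} (θ : V → Term F V) (A H : Atom P F V) : Prop :=
  A.subst θ = H.subst θ

/-- `θ` is a most general unifier of `A` and `H` iff it is a unifier and every
unifier of `A` and `H` factors through it. -/
def IsMGU {P F V : Type} (θ : V → Term F V) (A H : Atom P F V) : Prop :=
  IsUnifier θ A H ∧ ∀ σ : V → Term F V, IsUnifier σ A H → ∃ τ : V → Term F V,
    ∀ v, σ v = (θ v).subst τ

/-- A definite clause `head ← body`. -/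
structure Clause (P F V : Type) where
  head : Atom P F V
  body : List (Atom P F V)

/-- Application of a substitution to a clause. -/
def Clause.subst {P F V : Type} (σ : V → Term F V) (c : Clause P F V) : Clause P F V :=
  ⟨c.head.subst σ, c.body.map (Atom.subst σ)⟩

/-- The set of variables occurring in a clause. -/
def Clause.vars {P F V : Type} (c : Clause P F V) : Set V :=
  c.head.vars ∪ queryVars c.body

/-- One step of LD-resolution in the program `Prog`: the leftmost atom `A` of the
current query is the selected atom, and the next query is `(B̄ ++ rest)θ` where
`H ← B̄` is a variant (obtained via a renaming `ρ`) of a clause of `Prog` that is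
variable-disjoint with the current query and `θ` is a most general unifier of
`A` and `H`. -/
def LDStep {P F V : Type} (Prog : Set (Clause P F V))
    (Q Q' : List (Atom P F V)) : Prop :=
  ∃ (A : Atom P F V) (rest : List (Atom P F V)) (c : Clause P F V)
    (ρ : V → V) (θ : V → Term F V),
    Q = A :: rest ∧ c ∈ Prog ∧ Function.Injective ρ ∧
    Disjoint (queryVars Q) (Clause.vars (c.subst (fun v => Term.var (ρ v)))) ∧
    IsMGU θ A (c.subst (fun v => Term.var (ρ v))).head ∧
    Q' = ((c.subst (fun v => Term.var (ρ v))).body ++ rest).map (Atom.subst θ)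


/-! Well-modedness is an invariant of LD-resolution, and the leftmost atom of a well-moded query
has ground inputs because no atom precedes it. For the invariant: the unifier grounds the head
inputs, as they are unified with the ground inputs of the selected atom, so the instantiated body
is well-moded on its own; and the head outputs then carry only variables of the body outputs,
which the remaining atoms can rely on in place of the outputs of the selected atom. -/

variable {P F V : Type}

namespace Term

theorem subst_var (σ : V → Term F V) (v : V) : (Term.var v).subst σ = σ v := by
  rw [Term.subst]

theorem subst_fn (σ : V → Term F V) (f : F) (args : List (Term F V)) :
    (Term.fn f args).subst σ = .fn f (args.map (Term.subst σ)) := by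
  rw [Term.subst, List.map_attach_eq_pmap, List.pmap_eq_map]

theorem VarIn.subst {σ : V → Term F V} {v w : V} {t : Term F V}
    (hw : VarIn w t) (hv : VarIn v (σ w)) : VarIn v (t.subst σ) := by
  induction hw with
  | var => rwa [subst_var]
  | fn f hmem _ ih =>
    rw [subst_fn]
    exact .fn f (List.mem_map_of_mem hmem) ih

theorem VarIn.of_subst {σ : V → Term F V} {v : V} :
    ∀ {t : Term F V}, VarIn v (t.subst σ) → ∃ w, VarIn w t ∧ VarIn v (σ w)
  | .var w, h => ⟨w, .var w, by rwa [subst_var] at h⟩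
  | .fn f args, h => by
    rw [subst_fn] at h
    cases h with
    | fn _ hmem hv =>
      obtain ⟨s, hs, rfl⟩ := List.mem_map.1 hmem
      obtain ⟨w, hw, hv'⟩ := VarIn.of_subst hv
      exact ⟨w, .fn f hs hw, hv'⟩
termination_by t => sizeOf t
decreasing_by
  have := List.sizeOf_lt_of_mem hs
  simp only [Term.fn.sizeOf_spec]
  omega

end Term

def substVars (σ : V → Term F V) (X : Set V) : Set V :=
  {v | ∃ w ∈ X, Term.VarIn v (σ w)}

theorem substVars_mono (σ : V → Term F V) {X Y : Set V} (h : X ⊆ Y) :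
    substVars σ X ⊆ substVars σ Y :=
  fun _ ⟨w, hw, hv⟩ => ⟨w, h hw, hv⟩

theorem substVars_union (σ : V → Term F V) (X Y : Set V) :
    substVars σ (X ∪ Y) = substVars σ X ∪ substVars σ Y := by
  ext v
  simp only [substVars, Set.mem_union, Set.mem_ofPred_eq, or_and_right, exists_or]

@[simp]
theorem substVars_empty (σ : V → Term F V) : substVars σ ∅ = ∅ := by
  simp [substVars]

@[simp]
theorem varsOf_nil : varsOf ([] : List (Term F V)) = ∅ := by
  simp [varsOf]

theorem varsOf_append (ts us : List (Term F V)) :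
    varsOf (ts ++ us) = varsOf ts ∪ varsOf us := by
  ext v
  simp only [varsOf, List.mem_append, Set.mem_union, Set.mem_ofPred_eq, or_and_right, exists_or]

theorem varsOf_map_subst (σ : V → Term F V) (ts : List (Term F V)) :
    varsOf (ts.map (Term.subst σ)) = substVars σ (varsOf ts) := by
  ext v
  simp only [varsOf, substVars, List.mem_map, Set.mem_ofPred_eq]
  constructor
  · rintro ⟨_, ⟨t, ht, rfl⟩, hv⟩
    obtain ⟨w, hw, hv⟩ := Term.VarIn.of_subst hv
    exact ⟨w, ⟨t, ht, hw⟩, hv⟩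
  · rintro ⟨w, ⟨t, ht, hw⟩, hv⟩
    exact ⟨t.subst σ, ⟨t, ht, rfl⟩, hw.subst hv⟩

def outputVars (Q : List (Atom P F V)) : Set V :=
  varsOf (Q.map Atom.outputs).flatten

@[simp]
theorem outputVars_nil : outputVars ([] : List (Atom P F V)) = ∅ :=
  varsOf_nil

theorem outputVars_cons (A : Atom P F V) (Q : List (Atom P F V)) :
    outputVars (A :: Q) = varsOf A.outputs ∪ outputVars Q := by
  simp only [outputVars, List.map_cons, List.flatten_cons, varsOf_append]

theorem outputVars_map_subst (σ : V → Term F V) (Q : List (Atom P F V)) :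
    outputVars (Q.map (Atom.subst σ)) = substVars σ (outputVars Q) := by
  rw [outputVars, outputVars, ← varsOf_map_subst, List.map_flatten, List.map_map,
    List.map_map]
  rfl

def WellModedAfter (X : Set V) : List (Atom P F V) → Prop
  | [] => True
  | A :: Q => varsOf A.inputs ⊆ X ∧ WellModedAfter (X ∪ varsOf A.outputs) Q

theorem wellModedAfter_iff (X : Set V) (Q : List (Atom P F V)) :
    WellModedAfter X Q ↔
      ∀ i (h : i < Q.length), varsOf (Q.get ⟨i, h⟩).inputs ⊆ X ∪ outputVars (Q.take i) := by
  induction Q generalizing X with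
  | nil => simp [WellModedAfter]
  | cons A Q ih =>
    simp only [WellModedAfter, ih, List.length_cons, Nat.forall_lt_succ_left', List.get_eq_getElem,
      List.getElem_cons_zero, List.take_zero, outputVars_nil, Set.union_empty,
      List.getElem_cons_succ, List.take_succ_cons, outputVars_cons, Set.union_assoc]

theorem WellModedQuery.wellModedAfter {Q : List (Atom P F V)} (h : WellModedQuery Q) :
    WellModedAfter ∅ Q :=
  (wellModedAfter_iff ∅ Q).2 fun i hi => by simpa [outputVars] using h i hi

theorem WellModedAfter.mono {X Y : Set V} (hXY : X ⊆ Y) :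
    ∀ {Q : List (Atom P F V)}, WellModedAfter X Q → WellModedAfter Y Q
  | [], _ => trivial
  | _ :: _, ⟨hA, hQ⟩ => ⟨hA.trans hXY, hQ.mono (Set.union_subset_union_left _ hXY)⟩

theorem wellModedAfter_append {X : Set V} {B Q : List (Atom P F V)} :
    WellModedAfter X (B ++ Q) ↔ WellModedAfter X B ∧ WellModedAfter (X ∪ outputVars B) Q := by
  induction B generalizing X with
  | nil => simp [WellModedAfter]
  | cons A B ih => simp [WellModedAfter, ih, outputVars_cons, Set.union_assoc, and_assoc]

theorem WellModedAfter.subst (σ : V → Term F V) :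
    ∀ {X : Set V} {Q : List (Atom P F V)}, WellModedAfter X Q →
      WellModedAfter (substVars σ X) (Q.map (Atom.subst σ))
  | _, [], _ => trivial
  | _, A :: _, ⟨hA, hQ⟩ => by
    refine ⟨?_, ?_⟩
    · simpa only [Atom.subst, varsOf_map_subst] using substVars_mono σ hA
    · simpa only [Atom.subst, varsOf_map_subst, substVars_union] using hQ.subst σ

theorem wellModedClause_iff {H : Atom P F V} {B : List (Atom P F V)} :
    WellModedClause H B ↔
      WellModedAfter (varsOf H.inputs) B ∧ varsOf H.outputs ⊆ varsOf H.inputs ∪ outputVars B := by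
  simp only [WellModedClause, wellModedAfter_iff, outputVars, varsOf_append]

theorem WellModedClause.subst {H : Atom P F V} {B : List (Atom P F V)}
    (h : WellModedClause H B) (σ : V → Term F V) :
    WellModedClause (H.subst σ) (B.map (Atom.subst σ)) := by
  obtain ⟨hB, hH⟩ := wellModedClause_iff.1 h
  refine wellModedClause_iff.2 ⟨?_, ?_⟩
  · simpa only [Atom.subst, varsOf_map_subst] using hB.subst σ
  · simpa only [Atom.subst, varsOf_map_subst, outputVars_map_subst, ← substVars_union] using
      substVars_mono σ hH

theorem WellModedAfter.resolvent {A H : Atom P F V} {rest B : List (Atom P F V)}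
    {θ : V → Term F V} (hQ : WellModedAfter ∅ (A :: rest)) (hcl : WellModedClause H B)
    (hθ : IsUnifier θ A H) : WellModedAfter ∅ ((B ++ rest).map (Atom.subst θ)) := by
  obtain ⟨hA, hrest⟩ := hQ
  obtain ⟨hB, hH⟩ := wellModedClause_iff.1 hcl
  have hin : A.inputs.map (Term.subst θ) = H.inputs.map (Term.subst θ) := congrArg Atom.inputs hθ
  have hout : A.outputs.map (Term.subst θ) = H.outputs.map (Term.subst θ) :=
    congrArg Atom.outputs hθ
  have hHin : substVars θ (varsOf H.inputs) = ∅ := by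
    rw [← varsOf_map_subst, ← hin, varsOf_map_subst, Set.subset_empty_iff.1 hA, substVars_empty]
  have hAout : substVars θ (varsOf A.outputs) ⊆ outputVars (B.map (Atom.subst θ)) :=
    calc substVars θ (varsOf A.outputs) = substVars θ (varsOf H.outputs) := by
          rw [← varsOf_map_subst, hout, varsOf_map_subst]
      _ ⊆ substVars θ (varsOf H.inputs ∪ outputVars B) := substVars_mono θ hH
      _ = outputVars (B.map (Atom.subst θ)) := by
          rw [substVars_union, hHin, Set.empty_union, outputVars_map_subst]
  have hrest' := hrest.subst θ
  rw [substVars_union, substVars_empty, Set.empty_union] at hrest'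
  rw [List.map_append, wellModedAfter_append, Set.empty_union]
  exact ⟨hHin ▸ hB.subst θ, hrest'.mono hAout⟩

theorem LDStep.wellModedAfter {Prog : Set (Clause P F V)}
    (hProg : ∀ c ∈ Prog, WellModedClause c.head c.body) {Q Q' : List (Atom P F V)}
    (hstep : LDStep Prog Q Q') (hQ : WellModedAfter ∅ Q) : WellModedAfter ∅ Q' := by
  obtain ⟨A, rest, c, ρ, θ, rfl, hc, -, -, hθ, rfl⟩ := hstep
  exact hQ.resolvent ((hProg c hc).subst _) hθ.1

theorem Relation.ReflTransGen.wellModedAfter {Prog : Set (Clause P F V)}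
    (hProg : ∀ c ∈ Prog, WellModedClause c.head c.body) {Q₀ Q : List (Atom P F V)}
    (hreach : Relation.ReflTransGen (LDStep Prog) Q₀ Q) (hQ₀ : WellModedAfter ∅ Q₀) :
    WellModedAfter ∅ Q := by
  induction hreach with
  | refl => exact hQ₀
  | tail _ hstep ih => exact hstep.wellModedAfter hProg ih

/-- Let `Prog` be a well-moded program and `Q₀` a well-moded query, and let `ξ`
be an LD-derivation of `Q₀` in `Prog`. Then every atom selected in `ξ` (i.e.,
the leftmost atom of any query reachable from `Q₀` by LD-resolution steps)
contains ground terms in all of its input positions. -/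
theorem selected_atoms_have_ground_inputs
    {P F V : Type} (Prog : Set (Clause P F V))
    (hProg : ∀ c ∈ Prog, WellModedClause c.head c.body)
    (Q₀ : List (Atom P F V)) (hQ₀ : WellModedQuery Q₀)
    (Q : List (Atom P F V))
    (hreach : Relation.ReflTransGen (LDStep Prog) Q₀ Q)
    (A : Atom P F V) (rest : List (Atom P F V)) (hsel : Q = A :: rest) :
    ∀ t ∈ A.inputs, ∀ v : V, ¬ Term.VarIn v t := by
  have hQ : WellModedAfter ∅ Q := hreach.wellModedAfter hProg hQ₀.wellModedAfter
  subst hsel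
  intro t ht v hv
  exact hQ.1 ⟨t, ht, hv⟩
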